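/- For the ECA rule 140, with local rule h(a,b,c) = b ∧ (¬a ∨ c), and for every n > 3: for all block-sequential update schedules τ and τ', the asynchronous global functions differ, f^{(τ)} ≠ f^{(τ')}, if and only if there exists a cell i ∈ ℤ/nℤ with lab_τ((i+1,i)) ≠ lab_τ'((i+1,i)). -/

import Mathlib

/-!
Under rule 140 a cell in state 1 is cleared exactly when its left neighbour is 1 and its
right neighbour, as the cell reads it, is 0. Since rule 140 never changes a 1 whose right
neighbour is 1, the left neighbour reads the same whether or not it was updated before the
cell. So `f^{(τ)}(x)_i` depends on `τ` only through whether `i + 1` is updated strictly before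
`i`, i.e. through the labels `lab_τ(i + 1, i)`. Conversely, if these labels differ at `i`, the
configuration that is 0 only at `i + 2` (here `n > 3` is needed) keeps cell `i` at 1 when `i`
reads the original `x (i + 1) = 1`, and clears it when `i` reads the already cleared cell
`i + 1`.
-/

/-- One round of a block-sequential update: all cells of rank `k` are updated
simultaneously by the ECA local rule `h`, reading the current states. -/
def ecaStep (n : ℕ) (h : Bool → Bool → Bool → Bool) (τ : ZMod n → ℕ) (k : ℕ)
    (x : ZMod n → Bool) : ZMod n → Bool :=
  fun i => if τ i = k then h (x (i - 1)) (x i) (x (i + 1)) else x i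

/-- State after processing ranks `0, 1, …, k` in increasing order. -/
def ecaUpTo (n : ℕ) (h : Bool → Bool → Bool → Bool) (τ : ZMod n → ℕ) :
    ℕ → (ZMod n → Bool) → ZMod n → Bool
  | 0 => ecaStep n h τ 0
  | k + 1 => fun x => ecaStep n h τ (k + 1) (ecaUpTo n h τ k x)

/-- Asynchronous global function `f^{(τ)}` for the block-sequential update
schedule `τ : ZMod n → ℕ` (rank of each cell): a cell keeps the value it gets
in the round where it is updated (it is never updated again afterwards). -/
def ecaAsync (n : ℕ) (h : Bool → Bool → Bool → Bool) (τ : ZMod n → ℕ)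
    (x : ZMod n → Bool) : ZMod n → Bool :=
  fun i => ecaUpTo n h τ (τ i) x i

/-- Synchronous global function of the ECA with local rule `h`. -/
def ecaSync (n : ℕ) (h : Bool → Bool → Bool → Bool) (x : ZMod n → Bool) :
    ZMod n → Bool :=
  fun i => h (x (i - 1)) (x i) (x (i + 1))

/-- Label of the arc `(i, j)` for schedule `τ`:
`true` = ⊕ (τ i ≥ τ j), `false` = ⊖ (τ i < τ j). -/
def lab (n : ℕ) (τ : ZMod n → ℕ) (i j : ZMod n) : Bool :=
  decide (τ j ≤ τ i)

section Schedule

variable {n : ℕ} (h : Bool → Bool → Bool → Bool) (τ : ZMod n → ℕ) (x : ZMod n → Bool)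

theorem ecaUpTo_apply_of_lt {k : ℕ} {j : ZMod n} (hj : k < τ j) :
    ecaUpTo n h τ k x j = x j := by
  induction k with
  | zero => simp [ecaUpTo, ecaStep, hj.ne']
  | succ k ih => simp only [ecaUpTo, ecaStep, if_neg hj.ne', ih (by omega)]

theorem ecaUpTo_apply_of_le {k : ℕ} {j : ZMod n} (hj : τ j ≤ k) :
    ecaUpTo n h τ k x j = ecaAsync n h τ x j := by
  induction k with
  | zero => rw [ecaAsync, Nat.le_zero.mp hj]
  | succ k ih =>
    rcases hj.lt_or_eq with hlt | heq
    · simp only [ecaUpTo, ecaStep, if_neg hlt.ne, ih (by omega)]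
    · rw [ecaAsync, heq]

theorem ecaAsync_apply (i : ZMod n) :
    ecaAsync n h τ x i =
      h (if τ (i - 1) < τ i then ecaAsync n h τ x (i - 1) else x (i - 1)) (x i)
        (if τ (i + 1) < τ i then ecaAsync n h τ x (i + 1) else x (i + 1)) := by
  rw [ecaAsync]
  cases hi : τ i with
  | zero => simp only [ecaUpTo, ecaStep, hi, Nat.not_lt_zero, if_false, if_true]
  | succ k =>
    have hread (j : ZMod n) :
        ecaUpTo n h τ k x j = if τ j < k + 1 then ecaAsync n h τ x j else x j := by
      split_ifs with hj
      · exact ecaUpTo_apply_of_le h τ x (by omega)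
      · exact ecaUpTo_apply_of_lt h τ x (by omega)
    simp only [ecaUpTo, ecaStep, hi, if_true, ← hread,
      ecaUpTo_apply_of_lt h τ x (k := k) (j := i) (by omega)]

end Schedule

def rule140 : Bool → Bool → Bool → Bool := fun a b c => b && (!a || c)

section Rule140

variable {n : ℕ}

/-- Only the right neighbour's update order matters: if `i - 1` is updated first, it reads
`x i`, and when `x i = 1` rule 140 leaves `x (i - 1)` unchanged. -/
theorem ecaAsync_rule140_apply (τ : ZMod n → ℕ) (x : ZMod n → Bool) (i : ZMod n) :
    ecaAsync n rule140 τ x i =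
      (x i && (!x (i - 1) ||
        if τ (i + 1) < τ i then ecaAsync n rule140 τ x (i + 1) else x (i + 1))) := by
  rw [ecaAsync_apply]
  by_cases hleft : τ (i - 1) < τ i
  · rw [if_pos hleft]
    cases hxi : x i
    · rfl
    · rw [ecaAsync_apply rule140 τ x (i - 1), sub_add_cancel, if_neg (Nat.lt_asymm hleft), hxi]
      simp [rule140]
  · rw [if_neg hleft]
    rfl

theorem ecaAsync_rule140_eq_of_lt_iff {τ τ' : ZMod n → ℕ}
    (hτ : ∀ i, τ (i + 1) < τ i ↔ τ' (i + 1) < τ' i) :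
    ecaAsync n rule140 τ = ecaAsync n rule140 τ' := by
  funext x i
  induction hk : τ i using Nat.strong_induction_on generalizing i with
  | _ k ih =>
    rw [ecaAsync_rule140_apply τ, ecaAsync_rule140_apply τ']
    by_cases hright : τ (i + 1) < τ i
    · rw [if_pos hright, if_pos ((hτ i).mp hright), ih _ (hk ▸ hright) (i + 1) rfl]
    · rw [if_neg hright, if_neg (mt (hτ i).mpr hright)]

theorem natCast_ne_zero_of_pos_of_lt {k : ℕ} (hk : 0 < k) (hkn : k < n) :
    (k : ZMod n) ≠ 0 := by
  rw [Ne, ZMod.natCast_eq_zero_iff]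
  exact fun hdvd => absurd (Nat.le_of_dvd hk hdvd) (by omega)

theorem ecaAsync_rule140_ne (hn : 3 < n) {σ σ' : ZMod n → ℕ} {i : ZMod n}
    (hσ : ¬ σ (i + 1) < σ i) (hσ' : σ' (i + 1) < σ' i) :
    ecaAsync n rule140 σ ≠ ecaAsync n rule140 σ' := by
  have hcast (k : ℕ) (hk : 0 < k ∧ k ≤ 3) : (k : ZMod n) ≠ 0 :=
    natCast_ne_zero_of_pos_of_lt hk.1 (by omega)
  set x : ZMod n → Bool := fun j => j != i + 2
  have hx_left : x (i - 1) = true :=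
    bne_iff_ne.mpr fun h => hcast 3 (by norm_num) (by push_cast; linear_combination -h)
  have hx_self : x i = true :=
    bne_iff_ne.mpr fun h => hcast 2 (by norm_num) (by push_cast; linear_combination -h)
  have hx_right : x (i + 1) = true :=
    bne_iff_ne.mpr fun h => hcast 1 (by norm_num) (by push_cast; linear_combination -h)
  have hx_two : x (i + 2) = false := bne_self_eq_false _
  have hσ_keeps : ecaAsync n rule140 σ x i = true := by
    rw [ecaAsync_rule140_apply, if_neg hσ, hx_left, hx_self, hx_right]
    rfl
  have hσ'_clears_right : ecaAsync n rule140 σ' x (i + 1) = false := by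
    have hx_two' : ecaAsync n rule140 σ' x (i + 2) = false := by
      rw [ecaAsync_rule140_apply, hx_two, Bool.false_and]
    rw [ecaAsync_rule140_apply, add_sub_cancel_right, add_assoc, one_add_one_eq_two, hx_self,
      hx_right]
    split_ifs <;> simp [hx_two, hx_two']
  have hσ'_clears : ecaAsync n rule140 σ' x i = false := by
    rw [ecaAsync_rule140_apply, if_pos hσ', hσ'_clears_right, hx_left, hx_self]
    rfl
  intro heq
  simp [heq, hσ'_clears] at hσ_keeps

end Rule140

theorem lab_eq_lab_iff {n : ℕ} {τ τ' : ZMod n → ℕ} {i j : ZMod n} :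
    lab n τ j i = lab n τ' j i ↔ (τ j < τ i ↔ τ' j < τ' i) := by
  simp only [lab, decide_eq_decide, ← not_lt, not_iff_not]

/-- Rule 140 (h a b c = b ∧ (¬a ∨ c)): two schedules give different dynamics
iff they differ on the label of some arc $(i+1,i)$. -/
theorem rule_140_dynamics_differ_iff (n : ℕ) (hn : 3 < n) (τ τ' : ZMod n → ℕ) :
    ecaAsync n (fun a b c => b && (!a || c)) τ ≠
      ecaAsync n (fun a b c => b && (!a || c)) τ' ↔
    ∃ i : ZMod n, lab n τ (i + 1) i ≠ lab n τ' (i + 1) i := by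
  change ecaAsync n rule140 τ ≠ ecaAsync n rule140 τ' ↔ _
  simp only [Ne, lab_eq_lab_iff, ← not_forall, not_iff_not]
  refine ⟨fun heq i => ⟨fun h => ?_, fun h' => ?_⟩, ecaAsync_rule140_eq_of_lt_iff⟩
  · by_contra h'
    exact ecaAsync_rule140_ne hn h' h heq.symm
  · by_contra h
    exact ecaAsync_rule140_ne hn h h' heq
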